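/- arXiv:1805.05448 — 3 statements merged into one kernel-verified Lean document; each statement's English description precedes it below -/
import Mathlib

section
/- Let P be a finite set of points in the plane, each assigned one of 2k colors, with every color used. Among all color-spanning matchings, let M be one minimizing the maximum edge length. Then there exists an optimal matching M such that its maximum-length edge (p,q) satisfies: |pq| equals the minimum Euclidean distance between any point of color(p) and any point of color(q) in P. -/
/-! Exchange argument. Among the MinMax-optimal color-spanning matchings (finitely many) pick one
of least total weight. If its longest edge `(a, b)` were longer than some pair `(p, q)` with the
colors of `a` and `b`, replacing `(a, b)` by `(p, q)` keeps the matching color-spanning, does not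
increase the longest edge, and strictly decreases the weight. -/

open scoped Classical

noncomputable section

abbrev Pt := EuclideanSpace ℝ (Fin 2)

/-- A color-spanning matching of a `2*k`-colored point set `P`: `k` edges whose
`2*k` endpoints lie in `P` and have pairwise distinct colors (hence the
endpoints are pairwise distinct and all `2*k` colors are used). -/
structure CSM (k : ℕ) (P : Finset Pt) (color : Pt → Fin (2*k)) where
  e : Fin k → Pt × Pt
  mem1 : ∀ i, (e i).1 ∈ P
  mem2 : ∀ i, (e i).2 ∈ P
  colorInj : Function.Injective
    (fun x : Fin k × Bool => color (if x.2 then (e x.1).1 else (e x.1).2))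

def CSM.weight {k : ℕ} {P : Finset Pt} {color : Pt → Fin (2*k)}
    (M : CSM k P color) : ℝ :=
  ∑ i, dist (M.e i).1 (M.e i).2

def CSM.minEdge {k : ℕ} (hk : 0 < k) {P : Finset Pt} {color : Pt → Fin (2*k)}
    (M : CSM k P color) : ℝ :=
  Finset.univ.inf' ⟨⟨0, hk⟩, Finset.mem_univ _⟩ fun i => dist (M.e i).1 (M.e i).2

def CSM.maxEdge {k : ℕ} (hk : 0 < k) {P : Finset Pt} {color : Pt → Fin (2*k)}
    (M : CSM k P color) : ℝ :=
  Finset.univ.sup' ⟨⟨0, hk⟩, Finset.mem_univ _⟩ fun i => dist (M.e i).1 (M.e i).2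

namespace CSM

variable {k : ℕ} {P : Finset Pt} {color : Pt → Fin (2*k)}

theorem e_injective : Function.Injective (CSM.e : CSM k P color → Fin k → Pt × Pt) := by
  rintro ⟨e, _, _, _⟩ ⟨e', _, _, _⟩ (rfl : e = e')
  rfl

instance : Finite (CSM k P color) :=
  Finite.of_injective (fun M i => ((⟨(M.e i).1, M.mem1 i⟩, ⟨(M.e i).2, M.mem2 i⟩) : P × P))
    fun M M' h => e_injective <| funext fun i => by
      simpa [Prod.ext_iff] using congrFun h i

/-- Pairs up representatives of the colors `2 i` and `2 i + 1`. -/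
theorem nonempty_of_forall_exists_color (hsurj : ∀ c : Fin (2*k), ∃ p ∈ P, color p = c) :
    Nonempty (CSM k P color) := by
  choose rep hrepP hrep using hsurj
  refine ⟨⟨fun i => (rep ⟨2*i, by omega⟩, rep ⟨2*i+1, by omega⟩), fun _ => hrepP _,
    fun _ => hrepP _, ?_⟩⟩
  rintro ⟨i, _ | _⟩ ⟨j, _ | _⟩ h <;> simp_all [Fin.ext_iff] <;> omega

def replaceEdge (M : CSM k P color) (i : Fin k) {p q : Pt} (hp : p ∈ P) (hq : q ∈ P)
    (hcp : color p = color (M.e i).1) (hcq : color q = color (M.e i).2) : CSM k P color where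
  e := Function.update M.e i (p, q)
  mem1 j := by rcases eq_or_ne j i with rfl | h <;> simp [*, M.mem1]
  mem2 j := by rcases eq_or_ne j i with rfl | h <;> simp [*, M.mem2]
  colorInj := by
    convert M.colorInj using 2 with ⟨j, b⟩
    rcases eq_or_ne j i with rfl | h
    · cases b <;> simp [hcp, hcq]
    · simp [h]

theorem dist_le_maxEdge (M : CSM k P color) (hk : 0 < k) (i : Fin k) :
    dist (M.e i).1 (M.e i).2 ≤ M.maxEdge hk :=
  Finset.le_sup' (fun j => dist (M.e j).1 (M.e j).2) (Finset.mem_univ i)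

section replaceEdge

variable (M : CSM k P color) (i : Fin k) {p q : Pt} (hp : p ∈ P) (hq : q ∈ P)
  (hcp : color p = color (M.e i).1) (hcq : color q = color (M.e i).2)

theorem weight_replaceEdge_lt (hlt : dist p q < dist (M.e i).1 (M.e i).2) :
    (M.replaceEdge i hp hq hcp hcq).weight < M.weight := by
  refine Finset.sum_lt_sum (fun j _ => ?_)
    ⟨i, Finset.mem_univ i, by simpa [replaceEdge, weight]⟩
  rcases eq_or_ne j i with rfl | h
  · simpa [replaceEdge] using hlt.le
  · simp [replaceEdge, h]

theorem maxEdge_replaceEdge_le (hk : 0 < k) (hle : dist p q ≤ M.maxEdge hk) :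
    (M.replaceEdge i hp hq hcp hcq).maxEdge hk ≤ M.maxEdge hk := by
  refine Finset.sup'_le _ _ fun j _ => ?_
  rcases eq_or_ne j i with rfl | h
  · simpa [replaceEdge] using hle
  · simpa [replaceEdge, h] using M.dist_le_maxEdge hk j

end replaceEdge

theorem exists_maxEdge_eq_dist (M : CSM k P color) (hk : 0 < k) :
    ∃ i, M.maxEdge hk = dist (M.e i).1 (M.e i).2 := by
  obtain ⟨i, -, hi⟩ := Finset.exists_mem_eq_sup' (s := Finset.univ)
    ⟨⟨0, hk⟩, Finset.mem_univ _⟩ fun i => dist (M.e i).1 (M.e i).2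
  exact ⟨i, hi⟩

theorem exists_minmax_optimal_min_weight (hk : 0 < k) [Nonempty (CSM k P color)] :
    ∃ M : CSM k P color, (∀ M' : CSM k P color, M.maxEdge hk ≤ M'.maxEdge hk) ∧
      ∀ M' : CSM k P color, M'.maxEdge hk ≤ M.maxEdge hk → M.weight ≤ M'.weight := by
  obtain ⟨M₀, hM₀⟩ := Finite.exists_min fun M : CSM k P color => M.maxEdge hk
  obtain ⟨M, hM, hmin⟩ := Set.exists_min_image
    {M : CSM k P color | M.maxEdge hk ≤ M₀.maxEdge hk} weight (Set.toFinite _)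
    ⟨M₀, Set.mem_ofPred.2 le_rfl⟩
  exact ⟨M, fun M' => hM.trans (hM₀ M'), fun M' hM' => hmin M' (hM'.trans hM)⟩

end CSM

/-- There is a MinMax-optimal color-spanning matching whose maximum-length edge
realizes the bichromatic closest-pair distance between its endpoint colors. -/
theorem minmax_max_edge_is_bichromatic_closest_pair
    (k : ℕ) (hk : 0 < k) (P : Finset Pt) (color : Pt → Fin (2*k))
    (hsurj : ∀ c : Fin (2*k), ∃ p ∈ P, color p = c) :
    ∃ M : CSM k P color,
      (∀ M' : CSM k P color, M.maxEdge hk ≤ M'.maxEdge hk) ∧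
      ∃ i : Fin k,
        M.maxEdge hk = dist (M.e i).1 (M.e i).2 ∧
        ∀ p ∈ P, ∀ q ∈ P,
          color p = color (M.e i).1 → color q = color (M.e i).2 →
          dist (M.e i).1 (M.e i).2 ≤ dist p q := by
  have := CSM.nonempty_of_forall_exists_color hsurj
  obtain ⟨M, hopt, hweight⟩ := CSM.exists_minmax_optimal_min_weight (P := P) (color := color) hk
  obtain ⟨i, hi⟩ := M.exists_maxEdge_eq_dist hk
  refine ⟨M, hopt, i, hi, fun p hp q hq hcp hcq => ?_⟩
  by_contra! hlt
  have hmax := M.maxEdge_replaceEdge_le i hp hq hcp hcq hk (hi ▸ hlt.le)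
  exact (M.weight_replaceEdge_lt i hp hq hcp hcq hlt).not_ge (hweight _ hmax)

end
end

section
/- In the construction of the previous statement (G' = (V ∪ U, E ∪ E') with U = {u₁,…,u_k} and E' = { {uᵢ,v} : color(v) = i }), every colorful independent matching of size k in G' consists exclusively of edges from E'; that is, no edge of the matching has both endpoints in V. -/
/-- The graph `G' = (V ∪ U, E ∪ E')`: vertices are `V ⊕ Fin k` where `Sum.inr i`
is the new vertex `uᵢ`; edges are the edges of `G` together with
`E' = { {uᵢ, v} : v ∈ V, color v = i }`. -/
def hardGraph {V : Type*} (G : SimpleGraph V) {k : ℕ} (color : V → Fin k) :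
    SimpleGraph (V ⊕ Fin k) :=
  SimpleGraph.fromRel fun x y =>
    (∃ u v, x = Sum.inl u ∧ y = Sum.inl v ∧ G.Adj u v) ∨
    (∃ i v, x = Sum.inr i ∧ y = Sum.inl v ∧ color v = i)

/-- The coloring of `G'` with `2*k` colors (modeled as `Fin k ⊕ Fin k`):
a vertex `v ∈ V` keeps its color `color v` (as `Sum.inl (color v)`), and the
new vertex `uᵢ` gets the new color `k + i` (as `Sum.inr i`). -/
def hardColor {V : Type*} {k : ℕ} (color : V → Fin k) :
    V ⊕ Fin k → Fin k ⊕ Fin k :=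
  Sum.map color id

/-- A colorful independent matching of size `k` in `G'`: `k` edges of `G'` whose
`2*k` endpoints have pairwise distinct colors (hence cover all `2*k` colors),
such that no edge of `G'` joins endpoints of two distinct matching edges. -/
def IsCIM {V : Type*} (G : SimpleGraph V) {k : ℕ} (color : V → Fin k)
    (e : Fin k → (V ⊕ Fin k) × (V ⊕ Fin k)) : Prop :=
  (∀ i, (hardGraph G color).Adj (e i).1 (e i).2) ∧
  Function.Injective (fun x : Fin k × Bool =>
    hardColor color (if x.2 then (e x.1).1 else (e x.1).2)) ∧
  (∀ i j : Fin k, i ≠ j → ∀ a b : Bool,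
    ¬ (hardGraph G color).Adj (if a then (e i).1 else (e i).2)
        (if b then (e j).1 else (e j).2))

/-! The endpoint colouring is an injection between two sets of size `2k`, hence onto, so every
new vertex `uⱼ` is an endpoint of the matching. As `U` is independent in `G'`, no matching edge
contains two of them, so the `k` new vertices lie on `k` distinct matching edges: every edge has
an endpoint in `U`. -/

theorem hardGraph_not_adj_inr_inr {V : Type*} (G : SimpleGraph V) {k : ℕ} (color : V → Fin k)
    (a b : Fin k) : ¬ (hardGraph G color).Adj (Sum.inr a) (Sum.inr b) := by
  simp [hardGraph]

theorem hardColor_eq_inr_iff {V : Type*} {k : ℕ} (color : V → Fin k) (x : V ⊕ Fin k)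
    (j : Fin k) : hardColor color x = Sum.inr j ↔ x = Sum.inr j := by
  cases x <;> simp [hardColor]

theorem exists_inr_of_forall_exists_inr {α ι : Type*} [Finite ι] (e : ι → (α ⊕ ι) × (α ⊕ ι))
    (hcover : ∀ j, ∃ m, (e m).1 = Sum.inr j ∨ (e m).2 = Sum.inr j)
    (hnot : ∀ m a b, ¬ ((e m).1 = Sum.inr a ∧ (e m).2 = Sum.inr b)) (i : ι) :
    ∃ j, (e i).1 = Sum.inr j ∨ (e i).2 = Sum.inr j := by
  choose g hg using hcover
  have hg_inj : Function.Injective g := by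
    intro j j' hjj'
    rcases hg j with hj | hj <;> rcases hg j' with hj' | hj' <;> rw [hjj'] at hj
    · exact Sum.inr_injective (hj.symm.trans hj')
    · exact absurd ⟨hj, hj'⟩ (hnot _ _ _)
    · exact absurd ⟨hj', hj⟩ (hnot _ _ _)
    · exact Sum.inr_injective (hj.symm.trans hj')
  obtain ⟨j, rfl⟩ := Finite.surjective_of_injective hg_inj i
  exact ⟨j, hg j⟩

theorem IsCIM.forall_exists_inr {V : Type*} {G : SimpleGraph V} {k : ℕ} {color : V → Fin k}
    {e : Fin k → (V ⊕ Fin k) × (V ⊕ Fin k)} (he : IsCIM G color e) (j : Fin k) :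
    ∃ m, (e m).1 = Sum.inr j ∨ (e m).2 = Sum.inr j := by
  have hbij := (Fintype.bijective_iff_injective_and_card _).2 ⟨he.2.1, by
    simp only [Fintype.card_prod, Fintype.card_fin, Fintype.card_bool, Fintype.card_sum]; ring⟩
  obtain ⟨⟨m, b⟩, hm⟩ := hbij.2 (Sum.inr j)
  cases b
  · exact ⟨m, .inr ((hardColor_eq_inr_iff color _ j).1 hm)⟩
  · exact ⟨m, .inl ((hardColor_eq_inr_iff color _ j).1 hm)⟩

theorem colorfulIndependentMatching_no_VV_edge_general
    {V : Type*} (G : SimpleGraph V) (k : ℕ) (color : V → Fin k)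
    (e : Fin k → (V ⊕ Fin k) × (V ⊕ Fin k)) (he : IsCIM G color e) :
    ∀ i : Fin k, ¬ ∃ u v : V, (e i).1 = Sum.inl u ∧ (e i).2 = Sum.inl v := by
  rintro i ⟨u, v, hu, hv⟩
  have hnot : ∀ m a b, ¬ ((e m).1 = Sum.inr a ∧ (e m).2 = Sum.inr b) := by
    rintro m a b ⟨ha, hb⟩
    exact hardGraph_not_adj_inr_inr G color a b (ha ▸ hb ▸ he.1 m)
  obtain ⟨j, hj | hj⟩ := exists_inr_of_forall_exists_inr e he.forall_exists_inr hnot i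
  · exact Sum.inl_ne_inr (hu.symm.trans hj)
  · exact Sum.inl_ne_inr (hv.symm.trans hj)

/-- Every colorful independent matching of size `k` in `G'` consists exclusively
of edges of `E'`: no matching edge has both endpoints in `V`. -/
theorem colorfulIndependentMatching_no_VV_edge
    {V : Type*} (G : SimpleGraph V) (k : ℕ) (color : V → Fin k)
    (hsurj : Function.Surjective color)
    (e : Fin k → (V ⊕ Fin k) × (V ⊕ Fin k)) (he : IsCIM G color e) :
    ∀ i : Fin k, ¬ ∃ u v : V, (e i).1 = Sum.inl u ∧ (e i).2 = Sum.inl v :=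
  colorfulIndependentMatching_no_VV_edge_general G k color e he
end

section
/- Let G' = (V ∪ U, E ∪ E') be as above, and let V' ⊆ V be an independent set of G of size k with pairwise distinct colors. Then M = { {u_{color(v)}, v} : v ∈ V' } is a colorful independent matching of size k in G': its 2k endpoints have all 2k distinct colors, and no edge of G' joins endpoints of two distinct edges of M. -/
namespace hardGraph

variable {V : Type*} {G : SimpleGraph V} {k : ℕ} {color : V → Fin k}

@[simp]
theorem adj_inl_inl {u v : V} : (hardGraph G color).Adj (.inl u) (.inl v) ↔ G.Adj u v := by
  simpa [hardGraph, G.adj_comm] using G.ne_of_adj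

@[simp]
theorem adj_inr_inl {i : Fin k} {v : V} :
    (hardGraph G color).Adj (.inr i) (.inl v) ↔ color v = i := by
  simp [hardGraph, eq_comm]

@[simp]
theorem adj_inl_inr {v : V} {i : Fin k} :
    (hardGraph G color).Adj (.inl v) (.inr i) ↔ color v = i := by
  simp [hardGraph, eq_comm]

@[simp]
theorem not_adj_inr_inr {i j : Fin k} : ¬ (hardGraph G color).Adj (.inr i) (.inr j) := by
  simp [hardGraph]

end hardGraph

theorem Function.Injective.bool_ite_sum {ι α : Type*} {f : ι → α} (hf : f.Injective) :
    Function.Injective fun x : ι × Bool => if x.2 then Sum.inr (f x.1) else Sum.inl (f x.1) := by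
  rintro ⟨i, _ | _⟩ ⟨j, _ | _⟩ h <;> simp_all [hf.eq_iff]

theorem colorfulIS_gives_colorfulIndependentMatching_general
    {V : Type*} (G : SimpleGraph V) (k : ℕ) (color : V → Fin k)
    (g : Fin k → V)
    (hg : ∀ i j : Fin k, i ≠ j →
      color (g i) ≠ color (g j) ∧ ¬ G.Adj (g i) (g j)) :
    IsCIM G color (fun i => (Sum.inr (color (g i)), Sum.inl (g i))) := by
  have hinj : Function.Injective (color ∘ g) := fun i j h => by_contra fun hij => (hg i j hij).1 h
  refine ⟨fun i => hardGraph.adj_inr_inl.2 rfl, ?_, ?_⟩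
  · simpa [hardColor, apply_ite] using hinj.bool_ite_sum
  · intro i j hij a b
    obtain ⟨hcolor, hnadj⟩ := hg i j hij
    cases a <;> cases b <;> simp [hnadj, hcolor, Ne.symm hcolor]

/-- From a colorful independent set `V' = {g 0, …, g (k-1)}` of `G` (pairwise
distinct colors, pairwise non-adjacent), the edge set
`M = { {u_{color v}, v} : v ∈ V' }` is a colorful independent matching of size
`k` in `G'`. -/
theorem colorfulIS_gives_colorfulIndependentMatching
    {V : Type*} (G : SimpleGraph V) (k : ℕ) (color : V → Fin k)
    (hsurj : Function.Surjective color)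
    (g : Fin k → V)
    (hg : ∀ i j : Fin k, i ≠ j →
      color (g i) ≠ color (g j) ∧ ¬ G.Adj (g i) (g j)) :
    IsCIM G color (fun i => (Sum.inr (color (g i)), Sum.inl (g i))) :=
  colorfulIS_gives_colorfulIndependentMatching_general G k color g hg
end
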